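/- arXiv:2104.10206 — 2 statements merged into one kernel-verified Lean document; each statement's English description precedes it below -/
import Mathlib

section
/- Let J_m denote the set {0,…,m} with the quasi-discrete closure c(A) = {j : ∃ i ∈ A, |i − j| ≤ 1}, and let [0,m] carry the closure c₁(A) = {x ∈ [0,m] : ∃ a ∈ A, |x − a| ≤ 1}. Then J_m is a retract of ([0,m], c₁): the inclusion i : J_m → [0,m] and the nearest-integer rounding map r : [0,m] → J_m (rounding up at ties) are both continuous, and r ∘ i = id. -/
/-- The discrete interval `J_m = {0,…,m}` with closure `c(A) = {j : ∃ i ∈ A, |i-j| ≤ 1}`. -/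
def Jm (m : ℕ) : Type := {i : ℕ // i ≤ m}

/-- The real interval `[0,m]`. -/
def Im (m : ℕ) : Type := {x : ℝ // 0 ≤ x ∧ x ≤ (m : ℝ)}

/-- The closure operation on `J_m`. -/
def cJ (m : ℕ) (A : Set (Jm m)) : Set (Jm m) :=
  {j | ∃ i ∈ A, |(i.1 : ℤ) - (j.1 : ℤ)| ≤ 1}

/-- The thickening closure `c₁` on `[0,m]`. -/
def cI (m : ℕ) (A : Set (Im m)) : Set (Im m) :=
  {x | ∃ a ∈ A, |x.1 - a.1| ≤ 1}

/-- The inclusion `J_m → [0,m]`. -/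
def inclJ (m : ℕ) : Jm m → Im m :=
  fun i => ⟨(i.1 : ℝ), ⟨Nat.cast_nonneg _, by exact_mod_cast i.2⟩⟩

/-- The nearest-integer rounding map `[0,m] → J_m`, rounding up at ties. -/
noncomputable def rndJ (m : ℕ) : Im m → Jm m :=
  fun x => ⟨(⌊x.1 + 1 / 2⌋).toNat, by
    rw [Int.toNat_le]
    have h : x.1 + 1 / 2 < (m : ℝ) + 1 := by
      have := x.2.2; linarith
    have := Int.floor_lt.mpr (by exact_mod_cast h : x.1 + 1 / 2 < ((m + 1 : ℤ) : ℝ))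
    omega⟩

/-!
The inclusion is an isometry onto the integer points. Rounding is `x ↦ ⌊x + 1/2⌋`, and the floor
is monotone and commutes with adding `1`, so reals at distance at most one have floors at distance
at most one. On an integer the shift by `1/2` does not change the floor, whence `r ∘ i = id`.
-/

def ClosureContinuous {X Y : Type*} (c : Set X → Set X) (d : Set Y → Set Y) (f : X → Y) : Prop :=
  ∀ A, f '' c A ⊆ d (f '' A)

theorem Int.abs_floor_sub_floor_le_one {α : Type*} [Ring α] [LinearOrder α] [IsStrictOrderedRing α]
    [FloorRing α] {x y : α} (h : |x - y| ≤ 1) : |⌊x⌋ - ⌊y⌋| ≤ 1 := by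
  obtain ⟨hxy, hyx⟩ := abs_sub_le_iff.mp h
  have hx : ⌊x⌋ ≤ ⌊y⌋ + 1 := by
    simpa only [Int.floor_add_one] using Int.floor_le_floor (sub_le_iff_le_add'.mp hxy)
  have hy : ⌊y⌋ ≤ ⌊x⌋ + 1 := by
    simpa only [Int.floor_add_one] using Int.floor_le_floor (sub_le_iff_le_add'.mp hyx)
  rw [abs_le]
  constructor <;> omega

theorem Int.floor_intCast_add_half {α : Type*} [Field α] [LinearOrder α] [IsStrictOrderedRing α]
    [FloorRing α] (z : ℤ) : ⌊(z : α) + 1 / 2⌋ = z := by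
  rw [Int.floor_intCast_add, add_eq_left, Int.floor_eq_zero_iff]
  constructor <;> norm_num

theorem rndJ_coe (m : ℕ) (x : Im m) : ((rndJ m x).1 : ℤ) = ⌊x.1 + 1 / 2⌋ :=
  Int.toNat_of_nonneg (Int.floor_nonneg.mpr (by linarith [x.2.1]))

theorem inclJ_coe (m : ℕ) (i : Jm m) : (inclJ m i).1 = i.1 := rfl

theorem inclJ_closureContinuous (m : ℕ) : ClosureContinuous (cJ m) (cI m) (inclJ m) := by
  rintro A _ ⟨j, ⟨i, hiA, hij⟩, rfl⟩
  refine ⟨inclJ m i, ⟨i, hiA, rfl⟩, ?_⟩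
  rw [inclJ_coe, inclJ_coe, abs_sub_comm]
  exact_mod_cast hij

theorem rndJ_closureContinuous (m : ℕ) : ClosureContinuous (cI m) (cJ m) (rndJ m) := by
  rintro A _ ⟨x, ⟨a, haA, hxa⟩, rfl⟩
  refine ⟨rndJ m a, ⟨a, haA, rfl⟩, ?_⟩
  rw [rndJ_coe, rndJ_coe]
  exact Int.abs_floor_sub_floor_le_one (by rwa [add_sub_add_right_eq_sub, abs_sub_comm])

theorem rndJ_inclJ (m : ℕ) (i : Jm m) : rndJ m (inclJ m i) = i :=
  Subtype.ext <| Int.ofNat_inj.mp <| by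
    simpa only [rndJ_coe, inclJ_coe, Int.cast_natCast] using Int.floor_intCast_add_half (α := ℝ) i.1

/-- `J_m` is a retract of `([0,m], c₁)`: the inclusion and the rounding map are
continuous and their composite is the identity. -/
theorem Jm_retract_of_interval (m : ℕ) :
    (∀ A : Set (Jm m), inclJ m '' cJ m A ⊆ cI m (inclJ m '' A)) ∧
    (∀ A : Set (Im m), rndJ m '' cI m A ⊆ cJ m (rndJ m '' A)) ∧
    (∀ i : Jm m, rndJ m (inclJ m i) = i) :=
  ⟨inclJ_closureContinuous m, rndJ_closureContinuous m, rndJ_inclJ m⟩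
end

section
/- Let (X, E) be an abstract simplicial complex and for A ⊆ X define G(E)(A) to be the union of A with all simplices σ ∈ E that intersect A. Then G(E) is a Čech closure operation on X. Moreover, for closure space (Y, c) and set map f : X → Y, f : (X, G(E)) → (Y, c) is continuous if and only if f : (X, E) → (Y, VR(c)) is a simplicial map (i.e., f(σ) ∈ VR(c) for every σ ∈ E), where VR(c) is the set of nonempty finite σ ⊆ Y with σ ⊆ c({y}) for every y ∈ σ. -/
/-- The Vietoris–Rips complex of a closure space: nonempty finite subsets σ
with σ ⊆ c({x}) for every x ∈ σ. -/
def VR {Y : Type*} (c : Set Y → Set Y) : Set (Set Y) :=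
  {σ | σ.Nonempty ∧ σ.Finite ∧ ∀ y ∈ σ, σ ⊆ c {y}}

/-- The closure operation induced by a simplicial complex E: G(E)(A) is the
union of A with all simplices meeting A. -/
def GE {X : Type*} (E : Set (Set X)) (A : Set X) : Set X :=
  A ∪ ⋃₀ {σ | σ ∈ E ∧ (σ ∩ A).Nonempty}

/-!
A simplex meets `{x}` exactly when it contains `x`, so `GE E {x}` is the star of `x`, and the
continuity condition at singletons says that `f` maps each simplex through a vertex `x` into
`c {f x}` — which is the Vietoris–Rips condition on `f '' σ`. Conversely, `GE E A` is `A` together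
with simplices through points `a ∈ A`, which land in `c {f a} ⊆ c (f '' A)` by monotonicity of `c`.
-/

section ClosureOfComplex

variable {X : Type*} (E : Set (Set X))

theorem mem_GE_iff {A : Set X} {x : X} :
    x ∈ GE E A ↔ x ∈ A ∨ ∃ σ ∈ E, x ∈ σ ∧ ∃ a ∈ A, a ∈ σ := by
  simp only [GE, Set.mem_union, Set.mem_sUnion, Set.mem_ofPred_eq, Set.Nonempty, Set.mem_inter_iff]
  grind

theorem GE_empty : GE E ∅ = ∅ := by
  simp [GE]

theorem subset_GE (A : Set X) : A ⊆ GE E A :=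
  Set.subset_union_left

theorem GE_union (A B : Set X) : GE E (A ∪ B) = GE E A ∪ GE E B := by
  ext x
  simp only [Set.mem_union, mem_GE_iff]
  grind

theorem subset_GE_singleton {σ : Set X} (hσ : σ ∈ E) {x : X} (hx : x ∈ σ) : σ ⊆ GE E {x} :=
  fun _ hz => (mem_GE_iff E).2 <| Or.inr ⟨σ, hσ, hz, x, rfl, hx⟩

end ClosureOfComplex

theorem monotone_of_map_union {Y : Type*} {c : Set Y → Set Y}
    (hc : ∀ A B : Set Y, c (A ∪ B) = c A ∪ c B) : Monotone c := fun A B hAB => by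
  rw [← Set.union_eq_self_of_subset_left hAB, hc]
  exact Set.subset_union_left

section Adjunction

variable {X Y : Type*} {E : Set (Set X)} {c : Set Y → Set Y} {f : X → Y}

theorem image_mem_VR_of_image_GE_subset (hE : ∀ σ ∈ E, σ.Nonempty ∧ σ.Finite)
    (hf : ∀ A : Set X, f '' GE E A ⊆ c (f '' A)) {σ : Set X} (hσ : σ ∈ E) : f '' σ ∈ VR c := by
  refine ⟨(hE σ hσ).1.image f, (hE σ hσ).2.image f, ?_⟩
  rintro _ ⟨x, hx, rfl⟩
  calc f '' σ ⊆ f '' GE E {x} := Set.image_mono (subset_GE_singleton E hσ hx)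
    _ ⊆ c (f '' {x}) := hf {x}
    _ = c {f x} := by rw [Set.image_singleton]

theorem image_GE_subset_of_image_mem_VR (hc_ext : ∀ A : Set Y, A ⊆ c A)
    (hc_mono : Monotone c) (hf : ∀ σ ∈ E, f '' σ ∈ VR c) (A : Set X) :
    f '' GE E A ⊆ c (f '' A) := by
  rintro _ ⟨x, hx, rfl⟩
  rcases (mem_GE_iff E).1 hx with hxA | ⟨σ, hσ, hxσ, a, haA, haσ⟩
  · exact hc_ext _ (Set.mem_image_of_mem f hxA)
  · have hstar : f x ∈ c {f a} := (hf σ hσ).2.2 (f a) ⟨a, haσ, rfl⟩ ⟨x, hxσ, rfl⟩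
    exact hc_mono (Set.singleton_subset_iff.2 (Set.mem_image_of_mem f haA)) hstar

end Adjunction

theorem GE_closure_and_adjunction_general {X Y : Type*}
    (E : Set (Set X))
    (hE1 : ∀ σ ∈ E, σ.Nonempty ∧ σ.Finite)
    (c : Set Y → Set Y)
    (hc2 : ∀ A : Set Y, A ⊆ c A)
    (hc3 : ∀ A B : Set Y, c (A ∪ B) = c A ∪ c B)
    (f : X → Y) :
    (GE E ∅ = ∅) ∧
    (∀ A : Set X, A ⊆ GE E A) ∧
    (∀ A B : Set X, GE E (A ∪ B) = GE E A ∪ GE E B) ∧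
    ((∀ A : Set X, f '' GE E A ⊆ c (f '' A)) ↔ (∀ σ ∈ E, f '' σ ∈ VR c)) :=
  ⟨GE_empty E, subset_GE E, GE_union E,
    fun hf _ hσ => image_mem_VR_of_image_GE_subset hE1 hf hσ,
    image_GE_subset_of_image_mem_VR hc2 (monotone_of_map_union hc3)⟩

/-- G(E) is a Čech closure operation, and f : (X, G(E)) → (Y, c) is continuous
iff f : (X, E) → (Y, VR(c)) is a simplicial map. -/
theorem GE_closure_and_adjunction {X Y : Type*}
    (E : Set (Set X))
    (hE1 : ∀ σ ∈ E, σ.Nonempty ∧ σ.Finite)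
    (hE2 : ∀ x : X, ({x} : Set X) ∈ E)
    (hE3 : ∀ σ ∈ E, ∀ τ : Set X, τ.Nonempty → τ ⊆ σ → τ ∈ E)
    (c : Set Y → Set Y)
    (hc1 : c ∅ = ∅) (hc2 : ∀ A : Set Y, A ⊆ c A)
    (hc3 : ∀ A B : Set Y, c (A ∪ B) = c A ∪ c B)
    (f : X → Y) :
    (GE E ∅ = ∅) ∧
    (∀ A : Set X, A ⊆ GE E A) ∧
    (∀ A B : Set X, GE E (A ∪ B) = GE E A ∪ GE E B) ∧
    ((∀ A : Set X, f '' GE E A ⊆ c (f '' A)) ↔ (∀ σ ∈ E, f '' σ ∈ VR c)) :=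
  GE_closure_and_adjunction_general E hE1 c hc2 hc3 f
end
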